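/- Let C be a category with pullbacks and pushouts in which colimits are universal (pullback along any morphism preserves pushouts). If α: U → X and β: V → X are Zariski morphisms (monomorphisms), then the induced morphism from the pushout U ∪ V := U ⊔_{U ×_X V} V to X is again a Zariski morphism, and moreover (U ∪ V) ×_X (U ∪ V) ≅ U ∪ V. -/

import Mathlib

/-!
Being Zariski is the same as being a monomorphism, so it suffices to show that the two
projections `(U ∪ V) ×_X (U ∪ V) ⟶ U ∪ V` agree. Pulling back along any `t : Y ⟶ X` keeps
the pushout square defining `U ∪ V` a pushout square, so maps out of `(U ∪ V) ×_X Y` are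
determined by their restrictions to `U ×_X Y` and `V ×_X Y`. Doing this once for `t = γ` and
once more for `t = α` and `t = β` leaves the pieces `U ×_X U` and `V ×_X V`, where the claim
holds because `α` and `β` are mono, and `U ×_X V`, where it is the pushout condition. The
isomorphism `(U ∪ V) ×_X (U ∪ V) ≅ U ∪ V` is then the inverse of the diagonal.
-/

open CategoryTheory CategoryTheory.Limits

def IsZariskiMorphism {C : Type*} [Category C] [HasPullbacks C] {A B : C} (f : A ⟶ B) : Prop :=
  IsIso (pullback.diagonal f)

section

variable {C : Type*} [Category C] [HasPullbacks C]

lemma isZariskiMorphism_iff_mono {A B : C} (f : A ⟶ B) : IsZariskiMorphism f ↔ Mono f :=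
  pullback.isIso_diagonal_iff f

lemma Over.pullback_map_homMk_left {X Y A B : C} {a : A ⟶ X} {b : B ⟶ X} (k : A ⟶ B)
    (hk : k ≫ b = a) (t : Y ⟶ X) :
    ((Over.pullback t).map (Over.homMk k hk : Over.mk a ⟶ Over.mk b)).left =
      pullback.map a t b t k (𝟙 Y) (𝟙 X) (by simp [hk]) (by simp) := by
  apply pullback.hom_ext
  · exact (pullback.lift_fst _ _ _).trans (pullback.lift_fst _ _ _).symm
  · exact (pullback.lift_snd _ _ _).trans
      ((pullback.lift_snd _ _ _).trans (Category.comp_id _)).symm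

variable [HasPushouts C] {U V X : C}

lemma isPushout_pullback_pushoutDesc {W Y : C} {f : W ⟶ U} {g : W ⟶ V} {α : U ⟶ X}
    {β : V ⟶ X} (w : f ≫ α = g ≫ β) (t : Y ⟶ X)
    [PreservesColimitsOfShape WalkingSpan (Over.pullback t)] :
    IsPushout (pullback.map (f ≫ α) t α t f (𝟙 Y) (𝟙 X) (by simp) (by simp))
      (pullback.map (f ≫ α) t β t g (𝟙 Y) (𝟙 X) (by simp [w]) (by simp))
      (pullback.map α t (pushout.desc α β w) t (pushout.inl f g) (𝟙 Y) (𝟙 X)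
        (by rw [Category.comp_id, pushout.inl_desc]) (by simp))
      (pullback.map β t (pushout.desc α β w) t (pushout.inr f g) (𝟙 Y) (𝟙 X)
        (by rw [Category.comp_id, pushout.inr_desc]) (by simp)) := by
  have hOver : IsPushout (Over.homMk f : Over.mk (f ≫ α) ⟶ Over.mk α)
      (Over.homMk g w.symm : Over.mk (f ≫ α) ⟶ Over.mk β)
      (Over.homMk (pushout.inl f g) (pushout.inl_desc _ _ _) :
        Over.mk α ⟶ Over.mk (pushout.desc α β w))
      (Over.homMk (pushout.inr f g) (pushout.inr_desc _ _ _) :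
        Over.mk β ⟶ Over.mk (pushout.desc α β w)) :=
    IsPushout.of_map (Over.forget X) (Over.OverMorphism.ext pushout.condition)
      (IsPushout.of_hasPushout f g)
  have := (hOver.map (Over.pullback t)).map (Over.forget Y)
  simp only [Over.forget_map, Over.pullback_map_homMk_left] at this
  exact this

variable (α : U ⟶ X) (β : V ⟶ X)

lemma pullback_snd_comp_inl [Mono α] [PreservesColimitsOfShape WalkingSpan (Over.pullback α)] :
    pullback.snd (pushout.desc α β pullback.condition) α ≫ pushout.inl _ _ =
      pullback.fst (pushout.desc α β pullback.condition) α := by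
  refine (isPushout_pullback_pushoutDesc pullback.condition α).hom_ext ?_ ?_ <;>
    simp only [pullback.lift_fst, pullback.lift_snd_assoc, Category.comp_id]
  · rw [fst_eq_snd_of_mono_eq]
  · rw [← pullbackSymmetry_hom_comp_fst β α, Category.assoc, pushout.condition,
      pullbackSymmetry_hom_comp_snd_assoc]

lemma pullback_snd_comp_inr [Mono β] [PreservesColimitsOfShape WalkingSpan (Over.pullback β)] :
    pullback.snd (pushout.desc α β pullback.condition) β ≫ pushout.inr _ _ =
      pullback.fst (pushout.desc α β pullback.condition) β := by
  refine (isPushout_pullback_pushoutDesc pullback.condition β).hom_ext ?_ ?_ <;>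
    simp only [pullback.lift_fst, pullback.lift_snd_assoc, Category.comp_id]
  · rw [pushout.condition]
  · rw [fst_eq_snd_of_mono_eq]

lemma mono_pushoutDesc_pullback [Mono α] [Mono β]
    [∀ {Y : C} (t : Y ⟶ X), PreservesColimitsOfShape WalkingSpan (Over.pullback t)] :
    Mono (pushout.desc α β pullback.condition) := by
  refine IsKernelPair.mono_of_eq_fst_snd (IsPullback.of_hasPullback _ _) ?_
  refine (isPushout_pullback_pushoutDesc pullback.condition _).hom_ext ?_ ?_ <;>
    simp only [pullback.lift_fst, pullback.lift_snd, Category.comp_id]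
  · rw [← pullbackSymmetry_hom_comp_snd α (pushout.desc α β _), Category.assoc,
      pullback_snd_comp_inl, pullbackSymmetry_hom_comp_fst]
  · rw [← pullbackSymmetry_hom_comp_snd β (pushout.desc α β _), Category.assoc,
      pullback_snd_comp_inr, pullbackSymmetry_hom_comp_fst]

end

/-- in a category with pullbacks and pushouts in which colimits are universal
(pullback along any morphism preserves colimits), the union `U ∪ V := U ⊔_{U ×_X V} V` of two
Zariski morphisms `α : U ⟶ X`, `β : V ⟶ X` maps to `X` by a Zariski morphism, and
`(U ∪ V) ×_X (U ∪ V) ≅ U ∪ V`. -/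
theorem zariski_union {C : Type*} [Category C] [HasPullbacks C] [HasPushouts C]
    (huniv : ∀ {W X : C} (g : W ⟶ X), PreservesColimits (Over.pullback g))
    {U V X : C} (α : U ⟶ X) (β : V ⟶ X)
    (hα : IsZariskiMorphism α) (hβ : IsZariskiMorphism β)
    (γ : pushout (pullback.fst α β) (pullback.snd α β) ⟶ X)
    (hγ : γ = pushout.desc α β pullback.condition) :
    IsZariskiMorphism γ ∧
      Nonempty (pullback γ γ ≅ pushout (pullback.fst α β) (pullback.snd α β)) := by
  subst hγ
  have : Mono α := (isZariskiMorphism_iff_mono α).1 hα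
  have : Mono β := (isZariskiMorphism_iff_mono β).1 hβ
  have : ∀ {Y : C} (t : Y ⟶ X), PreservesColimitsOfShape WalkingSpan (Over.pullback t) :=
    fun t ↦ have := huniv t; inferInstance
  have : Mono (pushout.desc α β pullback.condition) := mono_pushoutDesc_pullback α β
  exact ⟨(isZariskiMorphism_iff_mono _).2 this, ⟨(asIso (pullback.diagonal _)).symm⟩⟩
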